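/- For every κ ∈ (0,1), the second derivative of the function h ↦ s_{1/2,κ}(h) at the point h = 1/2 is strictly positive if and only if κ < e^{−2}. -/

import Mathlib

/-!
Write `g h = κ ^ (h ^ 2)`, so that `s m κ h = m * g (1 - h) + (1 - m) * g h` and
`g'' h = 2 log κ (1 + 2 log κ h²) g h`. Since `1 - 1/2 = 1/2`, the second derivative of `s m κ`
at `1/2` is `g''(1/2) = κ^(1/4) log κ (log κ + 2)` for every `m`; for `0 < κ < 1` the factor
`log κ` is negative, so this is positive exactly when `log κ < -2`.
-/

noncomputable def s (m κ h : ℝ) : ℝ := m * κ ^ ((1 - h) ^ 2) + (1 - m) * κ ^ (h ^ 2)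

open Real

section

variable {κ : ℝ}

theorem hasDerivAt_rpow_sq (hκ : 0 < κ) (x : ℝ) :
    HasDerivAt (fun y => κ ^ (y ^ 2)) (2 * log κ * x * κ ^ (x ^ 2)) x :=
  ((hasDerivAt_pow 2 x).const_rpow hκ).congr_deriv (by push_cast; ring)

theorem hasDerivAt_deriv_rpow_sq (hκ : 0 < κ) (x : ℝ) :
    HasDerivAt (fun y => 2 * log κ * y * κ ^ (y ^ 2))
      (2 * log κ * (1 + 2 * log κ * x ^ 2) * κ ^ (x ^ 2)) x :=
  (((hasDerivAt_id' x).const_mul (2 * log κ)).mul (hasDerivAt_rpow_sq hκ x)).congr_deriv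
    (by ring)

theorem deriv_s (m : ℝ) (hκ : 0 < κ) :
    deriv (s m κ) = fun x =>
      (1 - m) * (2 * log κ * x * κ ^ (x ^ 2)) - m * (2 * log κ * (1 - x) * κ ^ ((1 - x) ^ 2)) := by
  funext x
  have hs : HasDerivAt (s m κ) (m * (2 * log κ * (1 - x) * κ ^ ((1 - x) ^ 2) * -1) +
      (1 - m) * (2 * log κ * x * κ ^ (x ^ 2))) x :=
    (((hasDerivAt_rpow_sq hκ (1 - x)).comp x ((hasDerivAt_id x).const_sub 1)).const_mul m).add
      ((hasDerivAt_rpow_sq hκ x).const_mul (1 - m))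
  rw [hs.deriv]
  ring

theorem deriv_deriv_s (m : ℝ) (hκ : 0 < κ) (x : ℝ) :
    deriv (deriv (s m κ)) x =
      m * (2 * log κ * (1 + 2 * log κ * (1 - x) ^ 2) * κ ^ ((1 - x) ^ 2)) +
        (1 - m) * (2 * log κ * (1 + 2 * log κ * x ^ 2) * κ ^ (x ^ 2)) := by
  have hs' : HasDerivAt (deriv (s m κ))
      ((1 - m) * (2 * log κ * (1 + 2 * log κ * x ^ 2) * κ ^ (x ^ 2)) -
        m * (2 * log κ * (1 + 2 * log κ * (1 - x) ^ 2) * κ ^ ((1 - x) ^ 2) * -1)) x := by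
    rw [deriv_s m hκ]
    exact ((hasDerivAt_deriv_rpow_sq hκ x).const_mul (1 - m)).sub
      (((hasDerivAt_deriv_rpow_sq hκ (1 - x)).comp x ((hasDerivAt_id x).const_sub 1)).const_mul m)
  rw [hs'.deriv]
  ring

theorem deriv_deriv_s_half (m : ℝ) (hκ : 0 < κ) :
    deriv (deriv (s m κ)) (1 / 2) = κ ^ (1 / 4 : ℝ) * (log κ * (log κ + 2)) := by
  rw [deriv_deriv_s m hκ]
  norm_num
  ring

end

theorem second_derivative_positive_iff (κ : ℝ) (hκ : κ ∈ Set.Ioo (0 : ℝ) 1) :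
    0 < deriv (deriv (fun h => s (1 / 2) κ h)) (1 / 2) ↔ κ < Real.exp (-2) := by
  obtain ⟨hκ0, hκ1⟩ := hκ
  have hlog : log κ < 0 := log_neg hκ0 hκ1
  rw [deriv_deriv_s_half _ hκ0, mul_pos_iff_of_pos_left (rpow_pos_of_pos hκ0 _),
    ← neg_mul_neg, mul_pos_iff_of_pos_left (neg_pos.2 hlog), ← log_lt_iff_lt_exp hκ0]
  constructor <;> intro <;> linarith
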